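/- arXiv:1805.00849 — 2 statements merged into one kernel-verified Lean document; each statement's English description precedes it below -/
import Mathlib

section
/- For any a, η > 0 there exists a constant R₀ = R₀(a,η) ≥ 1 such that for every d ≥ 1, every integer k ≥ 2 and every real m with m^η ≥ k, setting ε = e^{−a m^η}, one has λ(dε, k) ≤ d^k R₀^k e^{−a m^η}, where λ(ε,k) := k! Σ_{r=1}^{⌊k/2⌋} ε^r (3r+1)^{k−2r} / ( r (k−2r)! ). -/
open Finset

private lemma aux_log_le (a : ℝ) (ha : 0 < a) (x : ℝ) (hx : 1 ≤ x) :
    Real.log x ≤ a * x / 8 + max (max 1 (a / 4)) (Real.log (8 / a)) := by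
  have h8a : (0:ℝ) < 8 / a := by positivity
  have hx0 : (0:ℝ) < x := lt_of_lt_of_le one_pos hx
  have hax : (0:ℝ) < a * x / 8 := by positivity
  have e : Real.log x = Real.log (8 / a) + Real.log (a * x / 8) := by
    rw [← Real.log_mul (ne_of_gt h8a) (ne_of_gt hax)]
    congr 1
    field_simp
  have h1 : Real.log (a * x / 8) ≤ a * x / 8 - 1 := Real.log_le_sub_one_of_pos hax
  have h2 : Real.log (8 / a) ≤ max (max 1 (a / 4)) (Real.log (8 / a)) := le_max_right _ _
  linarith

set_option maxHeartbeats 800000 in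
/-- Equation (3.8): the key estimate `λ(dε,k) ≤ d^k R₀^k ε` for `ε = e^{-a m^η}`
and `m^η ≥ k`, where `λ(ε,k) = k! ∑_{r=1}^{⌊k/2⌋} ε^r (3r+1)^{k-2r}/(r (k-2r)!)`. -/
theorem lambda_function_estimate (a η : ℝ) (ha : 0 < a) (hη : 0 < η) :
    ∃ R₀ : ℝ, 1 ≤ R₀ ∧
      ∀ d : ℝ, 1 ≤ d → ∀ k : ℕ, 2 ≤ k → ∀ m : ℝ, (k : ℝ) ≤ m ^ η →
        (Nat.factorial k : ℝ) * ∑ r ∈ Finset.Icc 1 (k / 2),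
            (d * Real.exp (-a * m ^ η)) ^ r * (3 * (r : ℝ) + 1) ^ (k - 2 * r) /
              ((r : ℝ) * (Nat.factorial (k - 2 * r) : ℝ))
          ≤ d ^ k * R₀ ^ k * Real.exp (-a * m ^ η) := by
  set C := max (max 1 (a / 4)) (Real.log (8 / a)) with hCdef
  have hC1 : (1:ℝ) ≤ C := le_max_of_le_left (le_max_left _ _)
  have hCa : a / 4 ≤ C := le_max_of_le_left (le_max_right _ _)
  have hC0 : (0:ℝ) ≤ C := le_trans zero_le_one hC1
  have logle : ∀ x : ℝ, 1 ≤ x → Real.log x ≤ a * x / 8 + C := fun x hx => aux_log_le a ha x hx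
  refine ⟨8 * Real.exp (2 * C), ?_, ?_⟩
  · have h1 : (1:ℝ) ≤ Real.exp (2 * C) := Real.one_le_exp (by linarith)
    linarith
  intro d hd k hk m hm
  have hd0 : (0:ℝ) ≤ d := le_trans zero_le_one hd
  set ε := Real.exp (-a * m ^ η) with hεdef
  have hε0 : (0:ℝ) < ε := Real.exp_pos _
  have hK2 : (2:ℝ) ≤ (k:ℝ) := by exact_mod_cast hk
  have hK0 : (0:ℝ) < (k:ℝ) := by linarith
  -- the per-term bound
  have key : ∀ r ∈ Finset.Icc 1 (k / 2),
      (Nat.factorial k : ℝ) * ((d * ε) ^ r * (3 * (r:ℝ) + 1) ^ (k - 2*r) /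
          ((r:ℝ) * (Nat.factorial (k - 2*r) : ℝ)))
        ≤ d ^ k * ((4:ℝ)^k * Real.exp (2*C) ^ k) * ε := by
    intro r hr
    rw [Finset.mem_Icc] at hr
    obtain ⟨hr1, hr2⟩ := hr
    have h2rk : 2 * r ≤ k := by omega
    have hrk : r ≤ k := by omega
    have hR1 : (1:ℝ) ≤ (r:ℝ) := by exact_mod_cast hr1
    have hR0 : (0:ℝ) < (r:ℝ) := by linarith
    have hRK : 2 * (r:ℝ) ≤ (k:ℝ) := by exact_mod_cast h2rk
    set F : ℝ := (Nat.factorial (k - 2*r) : ℝ) with hFdef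
    have hF0 : (0:ℝ) < F := by
      rw [hFdef]; exact_mod_cast Nat.factorial_pos (k - 2*r)
    -- rewrite the summand
    have e1 : (Nat.factorial k : ℝ) * ((d * ε) ^ r * (3 * (r:ℝ) + 1) ^ (k - 2*r) /
          ((r:ℝ) * F))
        = d ^ r * (3 * (r:ℝ) + 1) ^ (k - 2*r) * ((Nat.factorial k : ℝ) / F) * ((r:ℝ))⁻¹
            * ε ^ r := by
      rw [mul_pow]; ring
    rw [e1]
    -- individual bounds
    have hbd : d ^ r ≤ d ^ k := pow_le_pow_right₀ hd hrk
    have hX : (3 * (r:ℝ) + 1) ^ (k - 2*r) ≤ (4:ℝ)^k * (r:ℝ) ^ (k - 2*r) := by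
      have h1 : (3 * (r:ℝ) + 1) ≤ 4 * (r:ℝ) := by linarith
      calc (3 * (r:ℝ) + 1) ^ (k - 2*r) ≤ (4 * (r:ℝ)) ^ (k - 2*r) :=
            pow_le_pow_left₀ (by linarith) h1 _
        _ = (4:ℝ)^(k - 2*r) * (r:ℝ)^(k - 2*r) := mul_pow _ _ _
        _ ≤ (4:ℝ)^k * (r:ℝ)^(k - 2*r) := by
            apply mul_le_mul_of_nonneg_right _ (by positivity)
            exact pow_le_pow_right₀ (by norm_num) (Nat.sub_le k (2*r))
    have hFle : (Nat.factorial k : ℝ) / F ≤ (k:ℝ) ^ (2*r) := by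
      rw [div_le_iff₀ hF0]
      have hn : Nat.factorial k ≤ Nat.factorial (k - 2*r) * k ^ (2*r) := by
        conv_lhs => rw [← Nat.factorial_mul_descFactorial h2rk]
        exact Nat.mul_le_mul_left _ (Nat.descFactorial_le_pow _ _)
      calc (Nat.factorial k : ℝ) ≤ ((Nat.factorial (k - 2*r) * k ^ (2*r) : ℕ) : ℝ) := by
            exact_mod_cast hn
        _ = (k:ℝ) ^ (2*r) * F := by push_cast; ring
    have hrinv : ((r:ℝ))⁻¹ ≤ 1 := by
      rw [inv_le_one_iff₀]; right; exact hR1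
    have hεr : ε ^ r ≤ Real.exp (-(a * (k:ℝ) * ((r:ℝ) - 1))) * ε := by
      have e2 : ε ^ r = Real.exp ((r:ℝ) * (-a * m ^ η)) := (Real.exp_nat_mul _ r).symm
      rw [e2, ← Real.exp_add, Real.exp_le_exp]
      have h1 : (0:ℝ) ≤ a * ((r:ℝ) - 1) := mul_nonneg ha.le (by linarith)
      have h2 : a * ((r:ℝ) - 1) * (k:ℝ) ≤ a * ((r:ℝ) - 1) * (m ^ η) :=
        mul_le_mul_of_nonneg_left hm h1
      linarith [h2]
    -- the key real-analytic estimate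
    have hstar : (r:ℝ) ^ (k - 2*r) * (k:ℝ) ^ (2*r) * Real.exp (-(a * (k:ℝ) * ((r:ℝ) - 1)))
        ≤ Real.exp (2*C) ^ k := by
      have e2 : (r:ℝ) ^ (k - 2*r) = Real.exp (((k - 2*r : ℕ):ℝ) * Real.log (r:ℝ)) := by
        rw [Real.exp_nat_mul, Real.exp_log hR0]
      have e3 : (k:ℝ) ^ (2*r) = Real.exp (((2*r : ℕ):ℝ) * Real.log (k:ℝ)) := by
        rw [Real.exp_nat_mul, Real.exp_log hK0]
      have e4 : Real.exp (2*C) ^ k = Real.exp ((k:ℝ) * (2*C)) := (Real.exp_nat_mul _ _).symm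
      rw [e2, e3, e4, ← Real.exp_add, ← Real.exp_add, Real.exp_le_exp]
      have hc1 : ((k - 2*r : ℕ):ℝ) = (k:ℝ) - 2*(r:ℝ) := by
        push_cast [h2rk]; ring
      have hc2 : ((2*r : ℕ):ℝ) = 2*(r:ℝ) := by push_cast; ring
      rw [hc1, hc2]
      have hlr := logle (r:ℝ) hR1
      have hlk := logle (k:ℝ) (by linarith)
      have hlr0 : (0:ℝ) ≤ Real.log (r:ℝ) := Real.log_nonneg hR1
      have hlk0 : (0:ℝ) ≤ Real.log (k:ℝ) := Real.log_nonneg (by linarith)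
      rcases Nat.lt_or_ge r 2 with h | h
      · -- r = 1
        have : r = 1 := by omega
        subst this
        simp only [Nat.cast_one, Real.log_one]
        have t1 : a / 4 * (k:ℝ) ≤ C * (k:ℝ) := mul_le_mul_of_nonneg_right hCa hK0.le
        have t2 : C * 2 ≤ C * (k:ℝ) := mul_le_mul_of_nonneg_left hK2 hC0
        linarith [hlk]
      · -- r ≥ 2
        have hR2 : (2:ℝ) ≤ (r:ℝ) := by exact_mod_cast h
        have t1 : ((k:ℝ) - 2*(r:ℝ)) * Real.log (r:ℝ) ≤ (k:ℝ) * Real.log (r:ℝ) := by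
          have := mul_nonneg (by linarith : (0:ℝ) ≤ 2*(r:ℝ)) hlr0
          linarith
        have t2 : (k:ℝ) * Real.log (r:ℝ) ≤ (k:ℝ) * (a * (r:ℝ) / 8 + C) :=
          mul_le_mul_of_nonneg_left hlr (by linarith)
        have t3 : 2*(r:ℝ) * Real.log (k:ℝ) ≤ 2*(r:ℝ) * (a * (k:ℝ) / 8 + C) :=
          mul_le_mul_of_nonneg_left hlk (by linarith)
        have t4 : 2*(r:ℝ) * C ≤ (k:ℝ) * C := mul_le_mul_of_nonneg_right hRK hC0
        have t5 : (3/8) * (a * (k:ℝ) * (r:ℝ)) ≤ a * (k:ℝ) * ((r:ℝ) - 1) := by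
          have := mul_nonneg (mul_nonneg ha.le hK0.le) (by linarith : (0:ℝ) ≤ 5*(r:ℝ)/8 - 1)
          linarith
        linarith [t1, t2, t3, t4, t5]
    -- combine everything
    have P1 : d ^ r * (3 * (r:ℝ) + 1) ^ (k - 2*r)
        ≤ d ^ k * ((4:ℝ)^k * (r:ℝ) ^ (k - 2*r)) :=
      mul_le_mul hbd hX (by positivity) (pow_nonneg hd0 k)
    have P2 : d ^ r * (3 * (r:ℝ) + 1) ^ (k - 2*r) * ((Nat.factorial k : ℝ) / F)
        ≤ d ^ k * ((4:ℝ)^k * (r:ℝ) ^ (k - 2*r)) * ((k:ℝ) ^ (2*r)) :=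
      mul_le_mul P1 hFle (by positivity) (by positivity)
    have P3 : d ^ r * (3 * (r:ℝ) + 1) ^ (k - 2*r) * ((Nat.factorial k : ℝ) / F) * ((r:ℝ))⁻¹
        ≤ d ^ k * ((4:ℝ)^k * (r:ℝ) ^ (k - 2*r)) * ((k:ℝ) ^ (2*r)) * 1 :=
      mul_le_mul P2 hrinv (by positivity) (by positivity)
    have P4 : d ^ r * (3 * (r:ℝ) + 1) ^ (k - 2*r) * ((Nat.factorial k : ℝ) / F) * ((r:ℝ))⁻¹
          * ε ^ r
        ≤ d ^ k * ((4:ℝ)^k * (r:ℝ) ^ (k - 2*r)) * ((k:ℝ) ^ (2*r)) * 1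
          * (Real.exp (-(a * (k:ℝ) * ((r:ℝ) - 1))) * ε) :=
      mul_le_mul P3 hεr (pow_nonneg hε0.le r) (by positivity)
    refine le_trans P4 ?_
    have e5 : d ^ k * ((4:ℝ)^k * (r:ℝ) ^ (k - 2*r)) * ((k:ℝ) ^ (2*r)) * 1
          * (Real.exp (-(a * (k:ℝ) * ((r:ℝ) - 1))) * ε)
        = (d ^ k * (4:ℝ)^k * ε) *
            ((r:ℝ) ^ (k - 2*r) * (k:ℝ) ^ (2*r) * Real.exp (-(a * (k:ℝ) * ((r:ℝ) - 1)))) := by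
      ring
    have e6 : d ^ k * ((4:ℝ)^k * Real.exp (2*C) ^ k) * ε
        = (d ^ k * (4:ℝ)^k * ε) * Real.exp (2*C) ^ k := by ring
    rw [e5, e6]
    exact mul_le_mul_of_nonneg_left hstar (by positivity)
  -- sum up
  calc (Nat.factorial k : ℝ) * ∑ r ∈ Finset.Icc 1 (k / 2),
        (d * ε) ^ r * (3 * (r : ℝ) + 1) ^ (k - 2 * r) /
          ((r : ℝ) * (Nat.factorial (k - 2 * r) : ℝ))
      = ∑ r ∈ Finset.Icc 1 (k / 2), (Nat.factorial k : ℝ) *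
          ((d * ε) ^ r * (3 * (r : ℝ) + 1) ^ (k - 2 * r) /
            ((r : ℝ) * (Nat.factorial (k - 2 * r) : ℝ))) := Finset.mul_sum _ _ _
    _ ≤ ∑ r ∈ Finset.Icc 1 (k / 2), d ^ k * ((4:ℝ)^k * Real.exp (2*C) ^ k) * ε :=
        Finset.sum_le_sum key
    _ = ((k / 2 : ℕ) : ℝ) * (d ^ k * ((4:ℝ)^k * Real.exp (2*C) ^ k) * ε) := by
        rw [Finset.sum_const, Nat.card_Icc, nsmul_eq_mul]
        norm_num
    _ ≤ (2:ℝ)^k * (d ^ k * ((4:ℝ)^k * Real.exp (2*C) ^ k) * ε) := by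
        apply mul_le_mul_of_nonneg_right _ (by positivity)
        have h1 : k / 2 ≤ 2 ^ k := le_trans (Nat.div_le_self k 2) (Nat.lt_two_pow_self (n := k)).le
        calc ((k / 2 : ℕ) : ℝ) ≤ ((2 ^ k : ℕ) : ℝ) := by exact_mod_cast h1
          _ = (2:ℝ)^k := by push_cast; ring
    _ = d ^ k * (8 * Real.exp (2*C)) ^ k * ε := by
        rw [show (8:ℝ) = 2 * 4 by norm_num, mul_pow, mul_pow]
        ring
end

section
/- Let ℓ ≥ 1 and N, s ≥ 1 be integers and define, for n, m ∈ {1, …, N}, ρ(n,m) = min{ |in − jm| : 1 ≤ i, j ≤ ℓ }. Then for every n ∈ {1, …, N}: |{ m ∈ {1, …, N} : ρ(n,m) ≤ s }| ≤ 3 ℓ² s. -/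
open Finset

open Classical in
/-- Equation (3.10): for `ρ(n,m) = min_{1 ≤ i,j ≤ ℓ} |in - jm|`, the number of
`m ∈ {1,…,N}` with `ρ(n,m) ≤ s` is at most `3ℓ²s`. -/
theorem neighbourhood_count_bound (ℓ N s : ℕ) (hℓ : 1 ≤ ℓ) (hN : 1 ≤ N) (hs : 1 ≤ s)
    (n : ℕ) (hn : n ∈ Finset.Icc 1 N) :
    ((Finset.Icc 1 N).filter fun m : ℕ =>
        ∃ i ∈ Finset.Icc 1 ℓ, ∃ j ∈ Finset.Icc 1 ℓ,
          ((i : ℤ) * (n : ℤ) - (j : ℤ) * (m : ℤ)).natAbs ≤ s).card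
      ≤ 3 * ℓ ^ 2 * s := by
  classical
  have hsub : ((Finset.Icc 1 N).filter fun m : ℕ =>
        ∃ i ∈ Finset.Icc 1 ℓ, ∃ j ∈ Finset.Icc 1 ℓ,
          ((i : ℤ) * (n : ℤ) - (j : ℤ) * (m : ℤ)).natAbs ≤ s)
      ⊆ (Finset.Icc 1 ℓ ×ˢ Finset.Icc 1 ℓ).biUnion (fun p =>
        (Finset.Icc 1 N).filter fun m : ℕ =>
          ((p.1 : ℤ) * (n : ℤ) - (p.2 : ℤ) * (m : ℤ)).natAbs ≤ s) := by
    intro m hm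
    simp only [mem_filter, mem_biUnion, mem_product] at *
    obtain ⟨hmN, i, hi, j, hj, h⟩ := hm
    exact ⟨(i, j), ⟨hi, hj⟩, hmN, h⟩
  refine le_trans (Finset.card_le_card hsub) ?_
  refine le_trans Finset.card_biUnion_le ?_
  have key : ∀ p ∈ Finset.Icc 1 ℓ ×ˢ Finset.Icc 1 ℓ,
      ((Finset.Icc 1 N).filter fun m : ℕ =>
        ((p.1 : ℤ) * (n : ℤ) - (p.2 : ℤ) * (m : ℤ)).natAbs ≤ s).card ≤ 3 * s := by
    intro p hp
    obtain ⟨hp1, hp2⟩ := Finset.mem_product.mp hp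
    have hj1 : 1 ≤ p.2 := (Finset.mem_Icc.mp hp2).1
    have hjz : (p.2 : ℤ) ≠ 0 := by positivity
    have hcard : ((Finset.Icc 1 N).filter fun m : ℕ =>
        ((p.1 : ℤ) * (n : ℤ) - (p.2 : ℤ) * (m : ℤ)).natAbs ≤ s).card
        ≤ (Finset.Icc ((p.1 : ℤ) * n - s) ((p.1 : ℤ) * n + s)).card := by
      refine Finset.card_le_card_of_injOn (fun m : ℕ => (p.2 : ℤ) * m) ?_ ?_
      · intro m hm
        simp only [Finset.mem_coe, mem_filter] at hm
        have h2 := hm.2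
        simp only [Finset.mem_coe, Finset.mem_Icc]
        omega
      · intro a _ b _ hab
        have : (a : ℤ) = b := mul_left_cancel₀ hjz hab
        exact_mod_cast this
    refine le_trans hcard ?_
    rw [Int.card_Icc]
    have : (p.1 : ℤ) * n + s + 1 - ((p.1 : ℤ) * n - s) = 2 * s + 1 := by ring
    rw [this]
    omega
  refine le_trans (Finset.sum_le_sum key) ?_
  rw [Finset.sum_const, Finset.card_product, Nat.card_Icc]
  simp only [Nat.add_sub_cancel, smul_eq_mul]
  ring_nf
  nlinarith [hℓ, hs]
end
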